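/- arXiv:1803.08779 — 2 statements merged into one kernel-verified Lean document; each statement's English description precedes it below -/
import Mathlib

section
/- Consider the affine maps on (0,1): τ_{a_0}(x) = x − 1/3 on (1/3,2/3), τ_{a_1}(x) = x + 1/3 on (1/3,2/3), τ_{c_0}(x) = (x+1)/2 on (0,1/3), τ_{c_1}(x) = x/2 on (2/3,1). Then the ranges R_{a_0} = (0,1/3), R_{a_1} = (2/3,1), R_{c_0} = (1/2,2/3), R_{c_1} = (1/3,1/2) are pairwise disjoint and their union has full Lebesgue measure in (0,1). -/
open MeasureTheory Set

/-- `τ_{a₀}(x) = x − 1/3` on `(1/3, 2/3)`. -/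
noncomputable def tauA0 : ℝ → ℝ := fun x => x - 1/3
/-- `τ_{a₁}(x) = x + 1/3` on `(1/3, 2/3)`. -/
noncomputable def tauA1 : ℝ → ℝ := fun x => x + 1/3
/-- `τ_{c₀}(x) = (x+1)/2` on `(0, 1/3)`. -/
noncomputable def tauC0 : ℝ → ℝ := fun x => (x + 1) / 2
/-- `τ_{c₁}(x) = x/2` on `(2/3, 1)`. -/
noncomputable def tauC1 : ℝ → ℝ := fun x => x / 2

/-- The ranges of the affine prefixing maps `τ_{a₀}, τ_{a₁}, τ_{c₀}, τ_{c₁}` are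
`(0,1/3)`, `(2/3,1)`, `(1/2,2/3)`, `(1/3,1/2)` respectively; these ranges are
pairwise disjoint and their union has full Lebesgue measure in `(0,1)`. -/
theorem blue_edge_ranges_partition :
    tauA0 '' Ioo (1/3 : ℝ) (2/3) = Ioo (0 : ℝ) (1/3) ∧
    tauA1 '' Ioo (1/3 : ℝ) (2/3) = Ioo (2/3 : ℝ) 1 ∧
    tauC0 '' Ioo (0 : ℝ) (1/3) = Ioo (1/2 : ℝ) (2/3) ∧
    tauC1 '' Ioo (2/3 : ℝ) 1 = Ioo (1/3 : ℝ) (1/2) ∧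
    ([Ioo (0 : ℝ) (1/3), Ioo (2/3 : ℝ) 1, Ioo (1/2 : ℝ) (2/3),
        Ioo (1/3 : ℝ) (1/2)] : List (Set ℝ)).Pairwise Disjoint ∧
    volume (Ioo (0 : ℝ) 1 \
      (Ioo (0 : ℝ) (1/3) ∪ Ioo (2/3 : ℝ) 1 ∪ Ioo (1/2 : ℝ) (2/3) ∪
        Ioo (1/3 : ℝ) (1/2))) = 0 := by
  refine ⟨?_, ?_, ?_, ?_, ?_, ?_⟩
  · ext y
    simp only [tauA0, mem_image, mem_Ioo]
    constructor
    · rintro ⟨x, ⟨h1, h2⟩, rfl⟩; constructor <;> linarith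
    · rintro ⟨h1, h2⟩; exact ⟨y + 1/3, ⟨by linarith, by linarith⟩, by ring⟩
  · ext y
    simp only [tauA1, mem_image, mem_Ioo]
    constructor
    · rintro ⟨x, ⟨h1, h2⟩, rfl⟩; constructor <;> linarith
    · rintro ⟨h1, h2⟩; exact ⟨y - 1/3, ⟨by linarith, by linarith⟩, by ring⟩
  · ext y
    simp only [tauC0, mem_image, mem_Ioo]
    constructor
    · rintro ⟨x, ⟨h1, h2⟩, rfl⟩; constructor <;> linarith
    · rintro ⟨h1, h2⟩; exact ⟨2*y - 1, ⟨by linarith, by linarith⟩, by ring⟩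
  · ext y
    simp only [tauC1, mem_image, mem_Ioo]
    constructor
    · rintro ⟨x, ⟨h1, h2⟩, rfl⟩; constructor <;> linarith
    · rintro ⟨h1, h2⟩; exact ⟨2*y, ⟨by linarith, by linarith⟩, by ring⟩
  · have d : ∀ a b c e : ℝ, b ≤ c → Disjoint (Ioo a b) (Ioo c e) := by
      intro a b c e h
      exact Set.disjoint_left.mpr (fun x hx hy => by
        obtain ⟨_, h2⟩ := hx; obtain ⟨h3, _⟩ := hy; linarith)
    refine List.Pairwise.cons ?_ (List.Pairwise.cons ?_ (List.Pairwise.cons ?_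
      (List.pairwise_singleton _ _)))
    · intro s hs
      simp only [List.mem_cons, List.mem_singleton, List.not_mem_nil, or_false] at hs
      rcases hs with rfl | rfl | rfl
      · exact d _ _ _ _ (by norm_num)
      · exact d _ _ _ _ (by norm_num)
      · exact d _ _ _ _ (by norm_num)
    · intro s hs
      simp only [List.mem_cons, List.mem_singleton, List.not_mem_nil, or_false] at hs
      rcases hs with rfl | rfl
      · exact (d _ _ _ _ (by norm_num)).symm
      · exact (d _ _ _ _ (by norm_num)).symm
    · intro s hs
      simp only [List.mem_singleton] at hs
      subst hs
      exact (d _ _ _ _ (by norm_num)).symm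
  · have hsub : Ioo (0 : ℝ) 1 \
      (Ioo (0 : ℝ) (1/3) ∪ Ioo (2/3 : ℝ) 1 ∪ Ioo (1/2 : ℝ) (2/3) ∪
        Ioo (1/3 : ℝ) (1/2)) ⊆ ({1/3, 1/2, 2/3} : Set ℝ) := by
      rintro x ⟨⟨h0, h1⟩, hx⟩
      simp only [mem_union, mem_Ioo, not_or, not_and_or, not_lt] at hx
      simp only [mem_insert_iff, mem_singleton_iff]
      obtain ⟨⟨⟨ha, hb⟩, hc⟩, hd⟩ := hx
      by_contra h
      push_neg at h
      obtain ⟨e1, e2, e3⟩ := h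
      rcases ha with h | h
      · linarith
      rcases hb with h' | h'
      · rcases hd with h'' | h''
        · exact e1 (le_antisymm h'' h)
        · rcases hc with h3 | h3
          · exact e2 (le_antisymm h3 h'')
          · exact e3 (le_antisymm h' h3)
      · linarith
    refine measure_mono_null hsub ?_
    have hfin : ({1/3, 1/2, 2/3} : Set ℝ).Finite :=
      ((Set.finite_singleton _).insert _).insert _
    exact hfin.measure_zero volume
end

section
/- Let Λ be a finite strongly connected k-graph with vertex matrices A_1, …, A_k and spectral radii ρ_1, …, ρ_k, let κ be the unimodular Perron–Frobenius eigenvector (κ_v > 0, Σ_v κ_v = 1, A_iκ = ρ_iκ for all i), and define M on cylinder sets by M(Z(λ)) = ρ_1^{−d(λ)_1}⋯ρ_k^{−d(λ)_k} κ_{s(λ)}. Then M is finitely additive on cylinder sets: for every λ ∈ Λ and n ∈ ℕ^k, M(Z(λ)) = Σ_{μ ∈ s(λ)Λ^n} M(Z(λμ)). -/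
open CategoryTheory
open scoped BigOperators

/-- A `k`-graph: a (small) category `Λ` together with a degree functor
`d : Λ → ℕ^k` satisfying the unique factorization property.  A morphism
`f : v ⟶ w` is thought of as a path with range `v` and source `w`, and
composition of composable paths is `≫`. -/
structure KGraph (k : ℕ) (Λ : Type) [SmallCategory Λ] where
  d : ∀ {u v : Λ}, (u ⟶ v) → (Fin k → ℕ)
  d_id : ∀ v : Λ, d (𝟙 v) = 0
  d_comp : ∀ {u v w : Λ} (f : u ⟶ v) (g : v ⟶ w), d (f ≫ g) = d f + d g
  factor : ∀ {u w : Λ} (f : u ⟶ w) (m n : Fin k → ℕ), d f = m + n →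
    ∃! p : Σ v : Λ, (u ⟶ v) × (v ⟶ w),
      d p.2.1 = m ∧ d p.2.2 = n ∧ p.2.1 ≫ p.2.2 = f

namespace PFAux

variable {k : ℕ} {Λ : Type} [SmallCategory Λ] (G : KGraph k Λ)

/-- Paths of degree `n` with range `b`. -/
abbrev Paths (b : Λ) (n : Fin k → ℕ) : Type := Σ u : Λ, {g : b ⟶ u // G.d g = n}

lemma paths_ext {b : Λ} {n : Fin k → ℕ} {u : Λ} {f g : b ⟶ u}
    (hf : G.d f = n) (hg : G.d g = n) (h : f = g) :
    (⟨u, ⟨f, hf⟩⟩ : Paths G b n) = ⟨u, ⟨g, hg⟩⟩ := by subst h; rfl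

lemma finite_fiber (hfin : ∀ n : Fin k → ℕ, Finite (Σ (v w : Λ), {f : v ⟶ w // G.d f = n}))
    (b u : Λ) (n : Fin k → ℕ) : Finite {g : b ⟶ u // G.d g = n} := by
  haveI := hfin n
  exact Finite.of_injective
    (fun g => (⟨b, u, g⟩ : Σ (v w : Λ), {f : v ⟶ w // G.d f = n}))
    (by rintro g g' h; simpa using h)

lemma eq_id_of_d_eq_zero {b u : Λ} (f : b ⟶ u) (hf : G.d f = 0) :
    (⟨u, ⟨f, hf⟩⟩ : Paths G b 0) = ⟨b, ⟨𝟙 b, G.d_id b⟩⟩ := by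
  obtain ⟨p, hp, hup⟩ := G.factor f 0 0 (by simp [hf])
  have h1 := hup ⟨b, 𝟙 b, f⟩ ⟨G.d_id b, hf, Category.id_comp f⟩
  have h2 := hup ⟨u, f, 𝟙 u⟩ ⟨hf, G.d_id u, Category.comp_id f⟩
  have h := h1.trans h2.symm
  have hb : b = u := congrArg Sigma.fst h
  subst hb
  simp only [Sigma.mk.inj_iff, heq_eq_eq, Prod.mk.injEq, true_and] at h
  exact (paths_ext G hf (G.d_id b) h.2).symm ▸ rfl

/-- Composition map realizing the bijection from factorization. -/
def compose {b : Λ} (m n : Fin k → ℕ) :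
    (Σ q : Paths G b m, Paths G q.1 n) → Paths G b (m + n) :=
  fun x => ⟨x.2.1, ⟨x.1.2.1 ≫ x.2.2.1, by rw [G.d_comp, x.1.2.2, x.2.2.2]⟩⟩

lemma compose_bijective {b : Λ} (m n : Fin k → ℕ) :
    Function.Bijective (compose G (b := b) m n) := by
  constructor
  · rintro ⟨⟨w, g, hg⟩, ⟨u, h1, hh⟩⟩ ⟨⟨w', g', hg'⟩, ⟨u', h1', hh'⟩⟩ h
    have hu : u = u' := congrArg Sigma.fst h
    subst hu
    simp only [compose, Sigma.mk.inj_iff, heq_eq_eq, Subtype.mk.injEq, true_and] at h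
    obtain ⟨p, hp, hup⟩ := G.factor (g ≫ h1) m n (by rw [G.d_comp, hg, hh])
    have e1 := hup ⟨w, g, h1⟩ ⟨hg, hh, rfl⟩
    have e2 := hup ⟨w', g', h1'⟩ ⟨hg', hh', h.symm⟩
    have e := e1.trans e2.symm
    have hw : w = w' := congrArg Sigma.fst e
    subst hw
    simp only [Sigma.mk.inj_iff, heq_eq_eq, Prod.mk.injEq, true_and] at e
    obtain ⟨eg, eh⟩ := e
    subst eg; subst eh
    rfl
  · rintro ⟨u, f, hfd⟩
    obtain ⟨⟨w, g, h1⟩, ⟨hg, hh, hcomp⟩, -⟩ := G.factor f m n hfd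
    exact ⟨⟨⟨w, ⟨g, hg⟩⟩, ⟨u, ⟨h1, hh⟩⟩⟩, paths_ext G _ hfd hcomp⟩

end PFAux

open PFAux

/-- For a finite strongly connected `k`-graph with vertex matrices
`A_i(v,w) = |vΛ^{e_i}w|`, spectral radii `ρ_i > 0` and unimodular
Perron–Frobenius eigenvector `κ` (`κ_v > 0`, `∑ κ_v = 1`, `A_i κ = ρ_i κ`),
the set function `M(Z(λ)) = ρ^{−d(λ)} κ_{s(λ)}` is finitely additive on
cylinder sets: `M(Z(λ)) = ∑_{μ ∈ s(λ)Λⁿ} M(Z(λμ))` for all `λ ∈ Λ`, `n ∈ ℕ^k`. -/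
theorem perron_frobenius_measure_finitely_additive
    {k : ℕ} {Λ : Type} [SmallCategory Λ] (G : KGraph k Λ)
    [Finite Λ]
    (hfin : ∀ n : Fin k → ℕ, Finite (Σ (v w : Λ), {f : v ⟶ w // G.d f = n}))
    (hconn : ∀ v w : Λ, Nonempty (v ⟶ w))
    (ρ : Fin k → ℝ) (hρ : ∀ i, 0 < ρ i)
    (κ : Λ → ℝ) (hκpos : ∀ v, 0 < κ v) (hκsum : ∑ᶠ v, κ v = 1)
    (heig : ∀ (i : Fin k) (v : Λ),
      ∑ᶠ w : Λ, (Nat.card {f : v ⟶ w // G.d f = Pi.single i 1} : ℝ) * κ w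
        = ρ i * κ v)
    (M : ∀ {a b : Λ}, (a ⟶ b) → ℝ)
    (hM : ∀ {a b : Λ} (f : a ⟶ b),
      M f = (∏ i, ρ i ^ (-(G.d f i : ℤ))) * κ b) :
    ∀ {a b : Λ} (lam : a ⟶ b) (n : Fin k → ℕ),
      M lam = ∑ᶠ p : Σ u : Λ, {g : b ⟶ u // G.d g = n}, M (lam ≫ p.2.1) := by
  classical
  cases nonempty_fintype Λ
  letI fib : ∀ (b u : Λ) (n : Fin k → ℕ), Fintype {g : b ⟶ u // G.d g = n} :=
    fun b u n => @Fintype.ofFinite _ (finite_fiber G hfin b u n)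
  -- single-step eigenvalue computation
  have step : ∀ (i : Fin k) (v : Λ),
      (∑ p : Paths G v (Pi.single i 1), κ p.1) = ρ i * κ v := by
    intro i v
    rw [← heig i v, finsum_eq_sum_of_fintype]
    rw [← Finset.univ_sigma_univ, Finset.sum_sigma]
    refine Finset.sum_congr rfl fun w _ => ?_
    simp only [Finset.sum_const, Finset.card_univ, nsmul_eq_mul, Nat.card_eq_fintype_card]
  -- main inductive computation
  have key : ∀ (s : ℕ) (n : Fin k → ℕ), (∑ i, n i) = s → ∀ b : Λ,
      (∑ p : Paths G b n, κ p.1) = (∏ i, ρ i ^ (n i)) * κ b := by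
    intro s
    induction s with
    | zero =>
      intro n hn b
      obtain rfl : n = 0 := by
        funext j
        have := Finset.sum_eq_zero_iff.mp hn j (Finset.mem_univ j)
        simpa using this
      have huniq : ∀ p : Paths G b 0, p = ⟨b, ⟨𝟙 b, G.d_id b⟩⟩ := by
        rintro ⟨u, f, hf⟩; exact eq_id_of_d_eq_zero G f hf
      haveI : Unique (Paths G b 0) := ⟨⟨⟨b, ⟨𝟙 b, G.d_id b⟩⟩⟩, huniq⟩
      rw [Finset.univ_unique, Finset.sum_singleton, huniq default]
      simp
    | succ s ih =>
      intro n hn b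
      have hne : ∃ i, n i ≠ 0 := by
        by_contra hc
        push_neg at hc
        simp [hc] at hn
      obtain ⟨i, hi⟩ := hne
      set m : Fin k → ℕ := Function.update n i (n i - 1) with hm
      have hmn : n = m + Pi.single i 1 := by
        funext j
        by_cases hj : j = i
        · subst hj; simp [hm, Function.update_self]; omega
        · simp [hm, Function.update_of_ne hj, Pi.single_eq_of_ne hj]
      have hms : (∑ j, m j) = s := by
        have : (∑ j, n j) = (∑ j, m j) + 1 := by
          rw [hmn]
          simp [Finset.sum_add_distrib, Finset.sum_pi_single]
        omega
      rw [hmn]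
      -- use the bijection
      have hbij := compose_bijective G (b := b) m (Pi.single i 1)
      rw [← Fintype.sum_bijective _ hbij (fun x => κ x.2.1) (fun p => κ p.1) (fun x => rfl)]
      rw [← Finset.univ_sigma_univ, Finset.sum_sigma]
      have : ∀ q : Paths G b m, (∑ r : Paths G q.1 (Pi.single i 1), κ r.1) = ρ i * κ q.1 :=
        fun q => step i q.1
      rw [Finset.sum_congr rfl fun q _ => this q]
      rw [← Finset.mul_sum, ih m hms b]
      simp only [Pi.add_apply]
      have hprod : (∏ j, ρ j ^ (m j + (Pi.single i 1 : Fin k → ℕ) j)) = (∏ j, ρ j ^ (m j)) * ρ i := by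
        have h2 : (∏ j, ρ j ^ (m j + (Pi.single i 1 : Fin k → ℕ) j))
            = ∏ j, (ρ j ^ (m j)) * (ρ j ^ ((Pi.single i 1 : Fin k → ℕ) j)) := by
          refine Finset.prod_congr rfl fun j _ => ?_
          rw [pow_add]
        rw [h2, Finset.prod_mul_distrib]
        congr 1
        rw [Finset.prod_eq_single i (fun j _ hj => by simp [Pi.single_eq_of_ne hj])
          (by simp)]
        simp
      rw [hprod]
      ring
  intro a b lam n
  rw [finsum_eq_sum_of_fintype]
  have hrw : ∀ p : Paths G b n,
      M (lam ≫ p.2.1) = (∏ i, ρ i ^ (-((G.d lam i : ℤ) + (n i : ℤ)))) * κ p.1 := by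
    intro p
    rw [hM]
    congr 1
    refine Finset.prod_congr rfl fun i _ => ?_
    have : G.d (lam ≫ p.2.1) = G.d lam + n := by rw [G.d_comp, p.2.2]
    rw [this]
    push_cast [Pi.add_apply]
    ring_nf
  rw [Finset.sum_congr rfl fun p _ => hrw p, ← Finset.mul_sum,
    key (∑ i, n i) n rfl b, hM lam]
  have hn : (∏ i, ρ i ^ (n i)) = ∏ i, ρ i ^ ((n i : ℤ)) := by
    refine Finset.prod_congr rfl fun i _ => ?_
    rw [zpow_natCast]
  rw [hn, ← mul_assoc, ← Finset.prod_mul_distrib]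
  congr 1
  refine Finset.prod_congr rfl fun i _ => ?_
  rw [← zpow_add₀ (hρ i).ne']
  congr 1
  ring
end
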